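/- Kummer's transformation holds: ₁F₁(a, c, z) = e^z · ₁F₁(c - a, c, -z) for all z ∈ ℂ, where c is not zero nor a negative integer. -/

import Mathlib

open Complex

noncomputable section

/-- Pochhammer symbol `(a)_n = a(a+1)⋯(a+n-1)`. -/
def poch (a : ℂ) (n : ℕ) : ℂ := ∏ i ∈ Finset.range n, (a + i)

/-- Confluent hypergeometric function `₁F₁(a, c, z)`. -/
def F11 (a c z : ℂ) : ℂ := ∑' n : ℕ, poch a n * z ^ n / (poch c n * (n.factorial : ℂ))

lemma poch_succ_left (a : ℂ) (n : ℕ) : poch a (n+1) = a * poch (a+1) n := by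
  rw [poch, Finset.prod_range_succ', mul_comm]
  simp only [Nat.cast_zero, add_zero, poch]
  congr 1
  refine Finset.prod_congr rfl fun i _ => ?_
  push_cast; ring

lemma poch_ne_zero (c : ℂ) (hc : ∀ m : ℕ, c ≠ -(m : ℂ)) (n : ℕ) : poch c n ≠ 0 := by
  rw [poch]
  refine Finset.prod_ne_zero_iff.2 fun i _ h => hc i ?_
  linear_combination h

lemma key (b : ℂ) (n : ℕ) : ∀ c : ℂ,
    ∑ k ∈ Finset.range (n+1), (-1)^k * (n.choose k : ℂ) * poch b k *
      ∏ i ∈ Finset.Ico k n, (c + i) = poch (c - b) n := by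
  induction n with
  | zero => intro c; simp [poch]
  | succ n ih =>
    intro c
    set g1 : ℕ → ℂ := fun j => (-1)^j * (n.choose j : ℂ) * poch b j *
      ∏ i ∈ Finset.Ico j (n+1), (c + i) with hg1
    have hstep : ∀ j ∈ Finset.range (n+1),
        (-1)^(j+1) * ((n+1).choose (j+1) : ℂ) * poch b (j+1) *
          ∏ i ∈ Finset.Ico (j+1) (n+1), (c + i)
        = (g1 (j+1) - g1 j) + (c - b) * ((-1)^j * (n.choose j : ℂ) * poch b j *
            ∏ i ∈ Finset.Ico j n, ((c+1) + i)) := by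
      intro j hj
      rw [Finset.mem_range] at hj
      have hlt : j < n + 1 := hj
      have hP : ∏ i ∈ Finset.Ico j (n+1), (c + i)
          = (c + j) * ∏ i ∈ Finset.Ico (j+1) (n+1), (c + i) :=
        Finset.prod_eq_prod_Ico_succ_bot hlt _
      have hshift : ∏ i ∈ Finset.Ico (j+1) (n+1), (c + i)
          = ∏ i ∈ Finset.Ico j n, ((c+1) + i) := by
        rw [Finset.prod_Ico_eq_prod_range, Finset.prod_Ico_eq_prod_range]
        simp only [Nat.succ_sub_succ]
        refine Finset.prod_congr rfl fun i _ => ?_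
        push_cast; ring
      have hpoch : poch b (j+1) = poch b j * (b + j) := Finset.prod_range_succ _ _
      have hch : ((n+1).choose (j+1) : ℂ) = (n.choose j : ℂ) + (n.choose (j+1) : ℂ) := by
        rw [Nat.choose_succ_succ]; push_cast; ring
      rw [hg1]
      simp only []
      rw [hpoch, hch, hP, hshift]
      ring
    have hsum : ∑ k ∈ Finset.range (n+2), (-1)^k * ((n+1).choose k : ℂ) * poch b k *
        ∏ i ∈ Finset.Ico k (n+1), (c + i)
        = (∑ j ∈ Finset.range (n+1), ((g1 (j+1) - g1 j) + (c - b) *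
            ((-1)^j * (n.choose j : ℂ) * poch b j * ∏ i ∈ Finset.Ico j n, ((c+1) + i))))
          + (-1)^0 * ((n+1).choose 0 : ℂ) * poch b 0 * ∏ i ∈ Finset.Ico 0 (n+1), (c + i) := by
      rw [Finset.sum_range_succ']
      congr 1
      exact Finset.sum_congr rfl hstep
    rw [hsum, Finset.sum_add_distrib, Finset.sum_range_sub g1, ← Finset.mul_sum, ih (c+1)]
    have hg1top : g1 (n+1) = 0 := by simp [hg1]
    have hg10 : g1 0 = ∏ i ∈ Finset.Ico 0 (n+1), (c + i) := by simp [hg1, poch]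
    have : poch (c - b) (n+1) = (c - b) * poch (c - b + 1) n := poch_succ_left _ _
    rw [this, hg1top, hg10]
    have : c + 1 - b = c - b + 1 := by ring
    rw [this]
    simp [poch]

lemma poch_norm_bound (a c : ℂ) (hc : ∀ m : ℕ, c ≠ -(m : ℂ)) :
    ∃ C : ℝ, 0 ≤ C ∧ ∀ n : ℕ, ‖poch a n‖ ≤ C * 4 ^ n * ‖poch c n‖ := by
  have hcz : ∀ i : ℕ, (0:ℝ) < ‖c + i‖ := fun i => by
    rw [norm_pos_iff]
    intro h
    exact hc i (by linear_combination h)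
  set M : ℕ → ℝ := fun i => ‖a + i‖ / ‖c + i‖ + 2 with hM
  have hM2 : ∀ i, 2 ≤ M i := fun i => by
    have := div_nonneg (norm_nonneg (a + i)) (norm_nonneg (c + i))
    simp only [hM]; linarith
  have hMnn : ∀ i, 0 ≤ M i := fun i => le_trans (by norm_num) (hM2 i)
  obtain ⟨N, hN⟩ : ∃ N : ℕ, ‖a‖ + 2 * ‖c‖ ≤ N := ⟨⌈‖a‖ + 2 * ‖c‖⌉₊, Nat.le_ceil _⟩
  have hM4 : ∀ i : ℕ, N ≤ i → M i ≤ 4 := by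
    intro i hi
    have hi' : (N : ℝ) ≤ i := by exact_mod_cast hi
    have h1 : ‖a + i‖ ≤ ‖a‖ + i := by
      calc ‖a + (i:ℂ)‖ ≤ ‖a‖ + ‖(i:ℂ)‖ := norm_add_le _ _
        _ = ‖a‖ + i := by rw [Complex.norm_natCast]
    have h2 : (i:ℝ) - ‖c‖ ≤ ‖c + i‖ := by
      have := norm_sub_le (c + (i:ℂ)) c
      simp only [add_sub_cancel_left, Complex.norm_natCast] at this
      linarith
    have hratio : ‖a + i‖ / ‖c + i‖ ≤ 2 := by
      rw [div_le_iff₀ (hcz i)]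
      nlinarith [hcz i]
    simp only [hM]; linarith
  refine ⟨∏ i ∈ Finset.range N, M i, Finset.prod_nonneg fun i _ => hMnn i, fun n => ?_⟩
  have hb : ‖poch a n‖ ≤ (∏ i ∈ Finset.range n, M i) * ‖poch c n‖ := by
    rw [poch, poch]
    simp only [norm_prod]
    rw [← Finset.prod_mul_distrib]
    refine Finset.prod_le_prod (fun i _ => norm_nonneg _) fun i _ => ?_
    have : ‖a + i‖ = ‖a + i‖ / ‖c + i‖ * ‖c + i‖ :=
      (div_mul_cancel₀ _ (ne_of_gt (hcz i))).symm
    rw [this]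
    have := hcz i
    have h2 : (0:ℝ) ≤ 2 * ‖c + (i:ℂ)‖ := by positivity
    simp only [hM]
    nlinarith
  have hprod : (∏ i ∈ Finset.range n, M i) ≤ (∏ i ∈ Finset.range N, M i) * 4 ^ n := by
    rcases le_total n N with h | h
    · calc ∏ i ∈ Finset.range n, M i ≤ ∏ i ∈ Finset.range N, M i := by
            rw [← Finset.prod_range_mul_prod_Ico M h]
            refine le_mul_of_one_le_right (Finset.prod_nonneg fun i _ => hMnn i) ?_
            calc (1:ℝ) = ∏ _i ∈ Finset.Ico n N, 1 := Finset.prod_const_one.symm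
              _ ≤ ∏ i ∈ Finset.Ico n N, M i :=
                  Finset.prod_le_prod (fun _ _ => zero_le_one) (fun i _ => by linarith [hM2 i])
        _ ≤ (∏ i ∈ Finset.range N, M i) * 4 ^ n := by
            refine le_mul_of_one_le_right (Finset.prod_nonneg fun i _ => hMnn i) ?_
            exact one_le_pow₀ (by norm_num : (1:ℝ) ≤ 4)
    · rw [← Finset.prod_range_mul_prod_Ico M h]
      refine mul_le_mul_of_nonneg_left ?_ (Finset.prod_nonneg fun i _ => hMnn i)
      calc ∏ i ∈ Finset.Ico N n, M i ≤ ∏ i ∈ Finset.Ico N n, (4:ℝ) := by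
            refine Finset.prod_le_prod (fun i _ => hMnn i) fun i hi => ?_
            exact hM4 i (Finset.mem_Ico.1 hi).1
        _ = 4 ^ (n - N) := by rw [Finset.prod_const, Nat.card_Ico]
        _ ≤ 4 ^ n := pow_le_pow_right₀ (by norm_num) (Nat.sub_le n N)
  calc ‖poch a n‖ ≤ (∏ i ∈ Finset.range n, M i) * ‖poch c n‖ := hb
    _ ≤ (∏ i ∈ Finset.range N, M i) * 4 ^ n * ‖poch c n‖ :=
        mul_le_mul_of_nonneg_right hprod (norm_nonneg _)

lemma kummerInnerSum (a c : ℂ) (hc : ∀ m : ℕ, c ≠ -(m : ℂ)) (z : ℂ) (n : ℕ) :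
    ∑ k ∈ Finset.range (n+1),
      (z ^ k / (k.factorial : ℂ)) *
        (poch (c - a) (n - k) * (-z) ^ (n - k) / (poch c (n - k) * ((n - k).factorial : ℂ)))
    = poch a n * z ^ n / (poch c n * (n.factorial : ℂ)) := by
  rw [← Finset.sum_range_reflect]
  have hmain : ∀ j ∈ Finset.range (n+1),
      (z ^ (n + 1 - 1 - j) / ((n + 1 - 1 - j).factorial : ℂ)) *
        (poch (c - a) (n - (n + 1 - 1 - j)) * (-z) ^ (n - (n + 1 - 1 - j)) /
          (poch c (n - (n + 1 - 1 - j)) * ((n - (n + 1 - 1 - j)).factorial : ℂ)))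
      = (z ^ n / (poch c n * (n.factorial : ℂ))) *
          ((-1)^j * (n.choose j : ℂ) * poch (c - a) j * ∏ i ∈ Finset.Ico j n, (c + i)) := by
    intro j hj'
    have hj : j ≤ n := Nat.lt_succ_iff.1 (Finset.mem_range.1 hj')
    have hjj : n + 1 - 1 - j = n - j := by omega
    have hjj2 : n - (n - j) = j := Nat.sub_sub_self hj
    rw [hjj, hjj2]
    have hfac : (n.factorial : ℂ)
        = (n.choose j : ℂ) * (j.factorial : ℂ) * ((n - j).factorial : ℂ) := by
      exact_mod_cast (Nat.choose_mul_factorial_mul_factorial hj).symm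
    have hpc : poch c j * ∏ i ∈ Finset.Ico j n, (c + i) = poch c n :=
      Finset.prod_range_mul_prod_Ico _ hj
    have hz : z ^ (n - j) * z ^ j = z ^ n := by rw [← pow_add, Nat.sub_add_cancel hj]
    have h1 : poch c j ≠ 0 := poch_ne_zero c hc j
    have hQ : (∏ i ∈ Finset.Ico j n, (c + i)) ≠ 0 := by
      refine Finset.prod_ne_zero_iff.2 fun i _ h => hc i ?_
      linear_combination h
    have h3 : ((n - j).factorial : ℂ) ≠ 0 := Nat.cast_ne_zero.2 (Nat.factorial_ne_zero _)
    have h4 : (j.factorial : ℂ) ≠ 0 := Nat.cast_ne_zero.2 (Nat.factorial_ne_zero _)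
    have h6 : (n.choose j : ℂ) ≠ 0 := Nat.cast_ne_zero.2 (Nat.choose_pos hj).ne'
    rw [← hz, ← hpc, hfac, neg_pow]
    field_simp
  rw [Finset.sum_congr rfl hmain, ← Finset.mul_sum, key (c - a) n c]
  have : c - (c - a) = a := by ring
  rw [this]
  ring

/-- Kummer's transformation: `₁F₁(a, c, z) = e^z ₁F₁(c - a, c, -z)`. -/
theorem kummer_transformation (a c : ℂ) (hc : ∀ m : ℕ, c ≠ -(m : ℂ)) (z : ℂ) :
    F11 a c z = Complex.exp z * F11 (c - a) c (-z) := by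
  have hexp : Complex.exp z = ∑' n : ℕ, z ^ n / (n.factorial : ℂ) := by
    rw [Complex.exp_eq_exp_ℂ, NormedSpace.exp_eq_tsum_div]
  have hs1 : Summable fun n : ℕ => ‖z ^ n / (n.factorial : ℂ)‖ := by
    simpa [norm_div, norm_pow] using Real.summable_pow_div_factorial ‖z‖
  obtain ⟨C, hC0, hC⟩ := poch_norm_bound (c - a) c hc
  have hs2 : Summable fun n : ℕ =>
      ‖poch (c - a) n * (-z) ^ n / (poch c n * (n.factorial : ℂ))‖ := by
    refine Summable.of_nonneg_of_le (fun n => norm_nonneg _) (fun n => ?_)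
      ((Real.summable_pow_div_factorial (4 * ‖z‖)).mul_left C)
    have hpc : (0:ℝ) < ‖poch c n‖ := norm_pos_iff.2 (poch_ne_zero c hc n)
    have hf : (0:ℝ) < (n.factorial : ℝ) := by exact_mod_cast Nat.factorial_pos n
    rw [norm_div, norm_mul, norm_mul, norm_pow, norm_neg, Complex.norm_natCast]
    have hform : C * ((4 * ‖z‖) ^ n / (n.factorial : ℝ))
        = (C * 4 ^ n * ‖poch c n‖ * ‖z‖ ^ n) / (‖poch c n‖ * (n.factorial : ℝ)) := by
      rw [mul_pow, show C * 4 ^ n * ‖poch c n‖ * ‖z‖ ^ n = ‖poch c n‖ * (C * (4 ^ n * ‖z‖ ^ n)) by ring,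
        mul_div_mul_left _ _ hpc.ne', mul_div_assoc, mul_div_assoc, mul_div_assoc]
    rw [hform, div_le_div_iff₀ (by positivity) (by positivity)]
    have h2 := mul_le_mul_of_nonneg_right (hC n) (pow_nonneg (norm_nonneg z) n)
    exact mul_le_mul_of_nonneg_right h2 (by positivity)
  rw [F11, F11, hexp, tsum_mul_tsum_eq_tsum_sum_antidiagonal_of_summable_norm hs1 hs2]
  refine tsum_congr fun n => ?_
  rw [Finset.Nat.sum_antidiagonal_eq_sum_range_succ_mk]
  exact (kummerInnerSum a c hc z n).symm

end
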